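/- arXiv:2404.17805 — 2 statements merged into one kernel-verified Lean document; each statement's English description precedes it below -/
import Mathlib

section
/- Let K, A be positive integers, a : Fin K → Fin A surjective, Θ a nonempty type, and F : Θ → Fin A → ℝ a parameterized per-attribute expected loss. Then the infimum over θ ∈ Θ of the supremum over λ in the standard simplex of ℝ^K of ∑_{k} λ_k · F(θ, a(k)) equals the infimum over θ ∈ Θ of the supremum over μ in the standard simplex of ℝ^A of ∑_{u} μ_u · F(θ, u). (Minimax equivalence of client-level fairness and group-level fairness, Theorem 1.) -/
/-!
For each θ, both suprema over a simplex are attained at vertices, so the left side is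
`max_k F θ (a k)` and the right side `max_u F θ u`; these agree because `a` is surjective.
-/

open Finset

section Simplex

variable {ι : Type*} [Fintype ι]

theorem sum_mul_le_iSup_of_mem_stdSimplex {w : ι → ℝ} (hw : w ∈ stdSimplex ℝ ι) (g : ι → ℝ) :
    ∑ i, w i * g i ≤ ⨆ i, g i :=
  calc ∑ i, w i * g i
      ≤ ∑ i, w i * ⨆ j, g j :=
        sum_le_sum fun i _ ↦ mul_le_mul_of_nonneg_left
          (le_ciSup (Set.finite_range g).bddAbove i) (hw.1 i)
    _ = ⨆ j, g j := by rw [← sum_mul, hw.2, one_mul]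

theorem iSup_stdSimplex_sum_mul (g : ι → ℝ) :
    ⨆ w : stdSimplex ℝ ι, ∑ i, (w : ι → ℝ) i * g i = ⨆ i, g i := by
  classical
  cases isEmpty_or_nonempty ι
  · -- both sides are then the junk value `sSup ∅ = 0`
    have : IsEmpty (stdSimplex ℝ ι) :=
      ⟨fun w ↦ by simpa using w.2.2⟩
    simp only [Real.iSup_of_isEmpty]
  have bound (w : stdSimplex ℝ ι) := sum_mul_le_iSup_of_mem_stdSimplex w.2 g
  refine le_antisymm (ciSup_le bound) (ciSup_le fun i ↦ ?_)
  refine le_ciSup_of_le ⟨_, Set.forall_mem_range.2 bound⟩ (stdSimplex.vertex i) ?_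
  simp [Pi.single_apply]

end Simplex

theorem stmt2_general (K A : ℕ)
    (a : Fin K → Fin A) (ha : Function.Surjective a)
    (Θ : Type*) (F : Θ → Fin A → ℝ) :
    (⨅ θ : Θ, ⨆ lam : stdSimplex ℝ (Fin K), ∑ k, (lam : Fin K → ℝ) k * F θ (a k)) =
      ⨅ θ : Θ, ⨆ mu : stdSimplex ℝ (Fin A), ∑ u, (mu : Fin A → ℝ) u * F θ u := by
  refine iInf_congr fun θ ↦ ?_
  rw [iSup_stdSimplex_sum_mul, iSup_stdSimplex_sum_mul]
  exact ha.iSup_comp (F θ)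

/-- Theorem 1, minimax equivalence: the infimum over θ of the supremum
over the client simplex of `∑ k, λ k * F θ (a k)` equals the infimum over θ of the
supremum over the attribute simplex of `∑ u, μ u * F θ u`. -/
theorem stmt2 (K A : ℕ) (hK : 0 < K) (hA : 0 < A)
    (a : Fin K → Fin A) (ha : Function.Surjective a)
    (Θ : Type*) [Nonempty Θ] (F : Θ → Fin A → ℝ) :
    (⨅ θ : Θ, ⨆ lam : stdSimplex ℝ (Fin K), ∑ k, (lam : Fin K → ℝ) k * F θ (a k)) =
      ⨅ θ : Θ, ⨆ mu : stdSimplex ℝ (Fin A), ∑ u, (mu : Fin A → ℝ) u * F θ u :=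
  stmt2_general K A a ha Θ F
end

section
/- Let K, A be positive integers, a : Fin K → Fin A surjective, Θ a type, F : Θ → Fin A → ℝ, and T(λ)(u) = ∑_{k : a(k) = u} λ_k. Suppose θ* ∈ Θ and λ* in the standard simplex of ℝ^K form a solution of the client-level minimax problem, i.e., λ* maximizes λ ↦ ∑_k λ_k · F(θ*, a(k)) over the standard simplex of ℝ^K, and θ* minimizes θ ↦ sup_{λ ∈ simplex} ∑_k λ_k · F(θ, a(k)) over Θ. Then θ* and μ* = T(λ*) form a solution of the group-level minimax problem: μ* maximizes μ ↦ ∑_u μ_u · F(θ*, u) over the standard simplex of ℝ^A, and θ* minimizes θ ↦ sup_{μ ∈ simplex} ∑_u μ_u · F(θ, u) over Θ. -/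
/-!
Pushing simplex weights forward along a surjection `a` maps the client simplex onto the group
simplex, and the client objective at `λ` equals the group objective at `T λ`. So both problems
range over the same set of objective values: their suprema coincide, and a client maximizer is
pushed to a group maximizer.
-/

open Finset

namespace stdSimplex

variable {S : Type*} [Semiring S] [PartialOrder S] [IsOrderedRing S]
  {X Y : Type*} [Fintype X] [Fintype Y]

lemma coe_map_eq_sum_filter [DecidableEq Y] (f : X → Y) (s : stdSimplex S X) :
    ⇑(map f s) = fun y => ∑ x ∈ univ.filter (fun x => f x = y), s x :=
  funext (FunOnFinite.linearMap_apply_apply S S f s)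

lemma sum_map_mul (f : X → Y) (s : stdSimplex S X) (g : Y → S) :
    ∑ y, map f s y * g y = ∑ x, s x * g (f x) := by
  classical
  rw [coe_map_eq_sum_filter, ← sum_fiberwise univ f fun x => s x * g (f x)]
  refine sum_congr rfl fun y _ => ?_
  rw [sum_mul]
  exact sum_congr rfl fun x hx => by rw [(mem_filter.mp hx).2]

lemma map_surjective {f : X → Y} (hf : Function.Surjective f) :
    Function.Surjective (map (S := S) f) := fun t =>
  ⟨map (Function.surjInv hf) t, by rw [map_comp_apply, Function.comp_surjInv, map_id_apply]⟩

lemma iSup_sum_mul_comp_eq [SupSet S] {f : X → Y} (hf : Function.Surjective f) (g : Y → S) :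
    ⨆ s : stdSimplex S X, ∑ x, s x * g (f x) = ⨆ t : stdSimplex S Y, ∑ y, t y * g y := by
  simp only [← (map_surjective (S := S) hf).iSup_comp, sum_map_mul]

end stdSimplex

open stdSimplex in
theorem stmt6_general (K A : ℕ)
    (a : Fin K → Fin A) (ha : Function.Surjective a)
    (Θ : Type*) (F : Θ → Fin A → ℝ) (θStar : Θ)
    (lamStar : Fin K → ℝ) (hmem : lamStar ∈ stdSimplex ℝ (Fin K))
    (hlamMax : ∀ lam ∈ stdSimplex ℝ (Fin K),
      ∑ k, lam k * F θStar (a k) ≤ ∑ k, lamStar k * F θStar (a k))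
    (hθMin : ∀ θ : Θ,
      (⨆ lam : stdSimplex ℝ (Fin K), ∑ k, (lam : Fin K → ℝ) k * F θStar (a k)) ≤
        ⨆ lam : stdSimplex ℝ (Fin K), ∑ k, (lam : Fin K → ℝ) k * F θ (a k)) :
    (fun u : Fin A => ∑ k ∈ Finset.univ.filter (fun k => a k = u), lamStar k)
        ∈ stdSimplex ℝ (Fin A) ∧
    (∀ mu ∈ stdSimplex ℝ (Fin A),
      ∑ u, mu u * F θStar u ≤
        ∑ u, (∑ k ∈ Finset.univ.filter (fun k => a k = u), lamStar k) * F θStar u) ∧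
    (∀ θ : Θ,
      (⨆ mu : stdSimplex ℝ (Fin A), ∑ u, (mu : Fin A → ℝ) u * F θStar u) ≤
        ⨆ mu : stdSimplex ℝ (Fin A), ∑ u, (mu : Fin A → ℝ) u * F θ u) := by
  let lam : stdSimplex ℝ (Fin K) := ⟨lamStar, hmem⟩
  have hpush : ⇑(map a lam) = fun u => ∑ k ∈ univ.filter (fun k => a k = u), lamStar k :=
    coe_map_eq_sum_filter a lam
  refine ⟨hpush ▸ (map a lam).2, fun mu hmu => ?_, fun θ => ?_⟩
  · obtain ⟨l, hl⟩ := map_surjective ha ⟨mu, hmu⟩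
    have hmu_eq : mu = ⇑(map a l) := congrArg Subtype.val hl.symm
    calc ∑ u, mu u * F θStar u = ∑ k, l k * F θStar (a k) := by rw [hmu_eq, sum_map_mul]
      _ ≤ ∑ k, lamStar k * F θStar (a k) := hlamMax l l.2
      _ = _ := (sum_map_mul a lam (F θStar)).symm.trans (by rw [hpush])
  · rw [← iSup_sum_mul_comp_eq ha, ← iSup_sum_mul_comp_eq ha]
    exact hθMin θ

/-- A solution `(θ*, λ*)` of the client-level minimax problem yields,
via the pushforward `μ* = T(λ*)`, a solution `(θ*, μ*)` of the group-level minimax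
problem. -/
theorem stmt6 (K A : ℕ) (hK : 0 < K) (hA : 0 < A)
    (a : Fin K → Fin A) (ha : Function.Surjective a)
    (Θ : Type*) (F : Θ → Fin A → ℝ) (θStar : Θ)
    (lamStar : Fin K → ℝ) (hmem : lamStar ∈ stdSimplex ℝ (Fin K))
    (hlamMax : ∀ lam ∈ stdSimplex ℝ (Fin K),
      ∑ k, lam k * F θStar (a k) ≤ ∑ k, lamStar k * F θStar (a k))
    (hθMin : ∀ θ : Θ,
      (⨆ lam : stdSimplex ℝ (Fin K), ∑ k, (lam : Fin K → ℝ) k * F θStar (a k)) ≤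
        ⨆ lam : stdSimplex ℝ (Fin K), ∑ k, (lam : Fin K → ℝ) k * F θ (a k)) :
    (fun u : Fin A => ∑ k ∈ Finset.univ.filter (fun k => a k = u), lamStar k)
        ∈ stdSimplex ℝ (Fin A) ∧
    (∀ mu ∈ stdSimplex ℝ (Fin A),
      ∑ u, mu u * F θStar u ≤
        ∑ u, (∑ k ∈ Finset.univ.filter (fun k => a k = u), lamStar k) * F θStar u) ∧
    (∀ θ : Θ,
      (⨆ mu : stdSimplex ℝ (Fin A), ∑ u, (mu : Fin A → ℝ) u * F θStar u) ≤
        ⨆ mu : stdSimplex ℝ (Fin A), ∑ u, (mu : Fin A → ℝ) u * F θ u) :=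
  stmt6_general K A a ha Θ F θStar lamStar hmem hlamMax hθMin
end
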